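/- Let q > 1 be real and let (x_n)_{n≥1} be a sequence of nonzero real numbers with 0 < |x₁| < |x₂| < ⋯ and ∑_{n=1}^∞ 1/x_n² < ∞, such that the entire function sin_q x = ∑_{m=0}^∞ (−1)^m x^{2m+1}/[2m+1]_q! admits the infinite product representation sin_q x = x·∏_{n=1}^∞ (1 − x²/x_n²) for all real x. Then the sum of reciprocal squares of the zeros satisfies ∑_{n=1}^∞ 1/x_n² = 1/[3]_q!. -/

import Mathlib

/-- The q-number `[n]_q = (qⁿ - 1)/(q - 1)`. -/
noncomputable def qNum (q : ℝ) (n : ℕ) : ℝ := (q ^ n - 1) / (q - 1)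

/-- The q-factorial `[n]_q! = [1]_q [2]_q ⋯ [n]_q` (with `[0]_q! = 1`). -/
noncomputable def qFact (q : ℝ) (n : ℕ) : ℝ := ∏ i ∈ Finset.range n, qNum q (i + 1)

/-- The q-sine function `sin_q x = ∑_{m=0}^∞ (-1)^m x^{2m+1}/[2m+1]_q!`. -/
noncomputable def qSin (q : ℝ) (x : ℝ) : ℝ :=
  ∑' m : ℕ, (-1 : ℝ) ^ m * x ^ (2 * m + 1) / qFact q (2 * m + 1)

open Filter Real Finset

lemma one_le_qNum {q : ℝ} (hq : 1 < q) (n : ℕ) (hn : 1 ≤ n) : 1 ≤ qNum q n := by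
  rw [qNum, le_div_iff₀ (by linarith)]
  have : q ^ 1 ≤ q ^ n := pow_le_pow_right₀ (le_of_lt hq) hn
  simp at this; nlinarith

lemma one_le_qFact {q : ℝ} (hq : 1 < q) (n : ℕ) : 1 ≤ qFact q n := by
  induction n with
  | zero => simp [qFact]
  | succ n ih =>
    rw [qFact, Finset.prod_range_succ, ← qFact]
    nlinarith [one_le_qNum hq (n+1) (Nat.le_add_left 1 n)]

lemma qFact_one {q : ℝ} (hq : 1 < q) : qFact q 1 = 1 := by
  simp [qFact, qNum]
  exact (sub_pos.mpr hq).ne'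

-- series side
lemma series_tendsto {q : ℝ} (hq : 1 < q) :
    Tendsto (fun t => (qSin q t - t) / t ^ 3) (nhdsWithin 0 {t : ℝ | t ≠ 0})
      (nhds (-(1 / qFact q 3))) := by
  set c := qFact q 3 with hc
  have key : ∀ t : ℝ, |t| ≤ 1/2 → t ≠ 0 →
      |(qSin q t - t) / t ^ 3 + 1 / c| ≤ 2 * t ^ 2 := by
    intro t ht htne
    have ht2 : t ^ 2 ≤ 1/4 := by nlinarith [abs_nonneg t, sq_abs t]
    set f : ℕ → ℝ := fun m => (-1 : ℝ) ^ m * t ^ (2 * m + 1) / qFact q (2 * m + 1) with hf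
    have hbound : ∀ m, |f m| ≤ |t| ^ (2 * m + 1) := by
      intro m
      rw [hf]
      simp only [abs_div, abs_mul, abs_pow, abs_neg, abs_one, one_pow, one_mul]
      rw [abs_of_nonneg (by linarith [one_le_qFact hq (2*m+1)] : (0:ℝ) ≤ qFact q (2*m+1))]
      rw [div_le_iff₀ (by linarith [one_le_qFact hq (2*m+1)])]
      rw [← abs_pow]
      nlinarith [one_le_qFact hq (2*m+1), abs_nonneg (t ^ (2*m+1))]
    have hsummable : Summable f := by
      apply Summable.of_norm_bounded (g := fun m => (t^2)^m) (summable_geometric_of_lt_one (by positivity) (by nlinarith))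
      intro m
      refine (hbound m).trans ?_
      calc |t| ^ (2*m+1) = (t^2)^m * |t| := by rw [pow_succ, pow_mul, sq_abs]
        _ ≤ (t^2)^m * 1 := by
            apply mul_le_mul_of_nonneg_left (by linarith) (by positivity)
        _ = (t^2)^m := by ring
    have hsplit : qSin q t = (∑ i ∈ Finset.range 2, f i) + ∑' m, f (m + 2) :=
      (Summable.sum_add_tsum_nat_add 2 hsummable).symm
    have hhead : (∑ i ∈ Finset.range 2, f i) = t - t ^ 3 / c := by
      rw [Finset.sum_range_succ, Finset.sum_range_one, hf]
      simp only []
      norm_num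
      rw [qFact_one hq, hc]
      ring
    have htail : |∑' m, f (m + 2)| ≤ 2 * |t| ^ 5 := by
      have hg : HasSum (fun m : ℕ => |t|^5 * (t^2)^m) (|t|^5 * (1 - t^2)⁻¹) :=
        (hasSum_geometric_of_lt_one (by positivity) (by nlinarith)).mul_left _
      have := tsum_of_norm_bounded hg (f := fun m => f (m + 2)) ?_
      · refine this.trans ?_
        have h1 : (1 - t^2)⁻¹ ≤ 2 := by
          rw [inv_le_comm₀ (by nlinarith) (by norm_num)]
          nlinarith
        have h5 : (0:ℝ) ≤ |t|^5 := by positivity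
        nlinarith
      · intro m
        refine (hbound (m + 2)).trans ?_
        have : 2 * (m + 2) + 1 = (2 * m) + 5 := by ring
        rw [this, pow_add, mul_comm (|t|^(2*m)), show |t| ^ (2*m) = (t^2)^m by rw [pow_mul, sq_abs]]
    have ht3 : |t ^ 3| ≠ 0 := by positivity
    have heq : qSin q t - t + t^3/c = ∑' m, f (m + 2) := by
      rw [hsplit, hhead]; ring
    have hcne : c ≠ 0 := by have := one_le_qFact hq 3; rw [hc]; linarith
    have : |(qSin q t - t) / t ^ 3 + 1 / c| = |qSin q t - t + t^3/c| / |t^3| := by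
      have e1 : t^3/c/t^3 = 1/c := by
        rw [div_div, mul_comm, ← div_div, div_self (pow_ne_zero 3 htne)]
      rw [← abs_div, ← e1, ← add_div]
    rw [this, heq, div_le_iff₀ (by positivity)]
    calc |∑' m, f (m+2)| ≤ 2 * |t|^5 := htail
      _ = 2 * t^2 * |t^3| := by
            rw [abs_pow, show (5:ℕ) = 2 + 3 by norm_num, pow_add, sq_abs]; ring
  have h1 : ∀ᶠ t in nhdsWithin (0:ℝ) {t : ℝ | t ≠ 0}, |t| < 1/2 := by
    apply eventually_nhdsWithin_of_eventually_nhds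
    have := eventually_abs_sub_lt (0:ℝ) (by norm_num : (0:ℝ) < 1/2)
    simpa using this
  have h2 : ∀ᶠ t in nhdsWithin (0:ℝ) {t : ℝ | t ≠ 0}, t ≠ 0 :=
    eventually_mem_nhdsWithin
  have hz : Tendsto (fun t : ℝ => 2 * t ^ 2) (nhdsWithin 0 {t : ℝ | t ≠ 0}) (nhds 0) := by
    apply tendsto_nhdsWithin_of_tendsto_nhds
    have : Continuous fun t : ℝ => 2 * t ^ 2 := by continuity
    simpa using this.tendsto 0
  have h0 : Tendsto (fun t => (qSin q t - t) / t ^ 3 + 1 / c)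
      (nhdsWithin 0 {t : ℝ | t ≠ 0}) (nhds 0) := by
    apply squeeze_zero_norm' _ hz
    filter_upwards [h1, h2] with t ht htne
    rw [Real.norm_eq_abs]
    exact key t (le_of_lt ht) htne
  have := h0.add (tendsto_const_nhds (x := -(1/c)))
  simpa using this

lemma abs_le_abs_of_le {x : ℕ → ℝ} (hmono : ∀ n, |x n| < |x (n + 1)|) (n : ℕ) :
    |x 0| ≤ |x n| := by
  induction n with
  | zero => exact le_refl _
  | succ n ih => exact le_of_lt (lt_of_le_of_lt ih (hmono n))

set_option maxHeartbeats 1000000 in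
lemma prod_tendsto (x : ℕ → ℝ) (hx0 : 0 < |x 0|) (hmono : ∀ n, |x n| < |x (n + 1)|)
    (hsum : Summable fun n => 1 / (x n) ^ 2) :
    Tendsto (fun t => ((∏' n : ℕ, (1 - t ^ 2 / (x n) ^ 2)) - 1) / t ^ 2)
      (nhdsWithin 0 {t : ℝ | t ≠ 0}) (nhds (-(∑' n : ℕ, 1 / (x n) ^ 2))) := by
  set S := ∑' n : ℕ, 1 / (x n) ^ 2 with hS
  have hxn : ∀ n, (0:ℝ) < (x n) ^ 2 := by
    intro n
    have h := lt_of_lt_of_le hx0 (abs_le_abs_of_le hmono n)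
    have hne : x n ≠ 0 := fun h0 => by simp [h0] at h
    positivity
  have hx0sq : (0:ℝ) < (x 0) ^ 2 := hxn 0
  have hSnonneg : 0 ≤ S := tsum_nonneg fun n => by positivity
  have key : ∀ t : ℝ, t ≠ 0 → |t| < |x 0| / 2 →
      |((∏' n : ℕ, (1 - t ^ 2 / (x n) ^ 2)) - 1) / t ^ 2 + S| ≤ S ^ 2 * t ^ 2 := by
    intro t htne ht
    have ht2 : t ^ 2 ≤ (x 0) ^ 2 / 2 := by
      have h1 : t ^ 2 = |t| ^ 2 := (sq_abs t).symm
      have h2 : (x 0) ^ 2 = |x 0| ^ 2 := (sq_abs (x 0)).symm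
      nlinarith [abs_nonneg t, hx0]
    set u : ℕ → ℝ := fun n => t ^ 2 / (x n) ^ 2 with hu
    have hu0 : ∀ n, 0 ≤ u n := fun n => by
      have := hxn n; positivity
    have huhalf : ∀ n, u n ≤ 1/2 := by
      intro n
      rw [hu, div_le_iff₀ (hxn n)]
      have hle : (x 0) ^ 2 ≤ (x n) ^ 2 := by
        have := abs_le_abs_of_le hmono n
        nlinarith [abs_nonneg (x 0), sq_abs (x 0), sq_abs (x n)]
      nlinarith
    have husum : Summable u := by
      have := hsum.mul_left (t ^ 2)
      exact this.congr fun n => mul_one_div _ _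
    set U := ∑' n, u n with hU
    have hUeq : U = t ^ 2 * S := by
      rw [hU, hS, ← tsum_mul_left]
      exact tsum_congr fun n => (mul_one_div _ _).symm
    have hU0 : 0 ≤ U := tsum_nonneg hu0
    have hpos : ∀ n, (0:ℝ) < 1 - u n := fun n => by linarith [huhalf n]
    -- summable of logs
    have hlog : Summable fun n => Real.log (1 - u n) := by
      rw [← summable_abs_iff]
      apply Summable.of_nonneg_of_le (fun n => abs_nonneg _) _ (husum.mul_left 2)
      intro n
      have h1 : Real.log (1 - u n) ≤ 0 :=
        Real.log_nonpos (by linarith [hpos n]) (by linarith [hu0 n])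
      rw [abs_of_nonpos h1]
      have h2 : -Real.log (1 - u n) = Real.log (1 - u n)⁻¹ := (Real.log_inv _).symm
      rw [h2]
      have h3 := Real.log_le_sub_one_of_pos (inv_pos.mpr (hpos n))
      have h4 : (1 - u n)⁻¹ - 1 ≤ 2 * u n := by
        rw [inv_eq_one_div, div_sub' (ne_of_gt (hpos n))]
        rw [div_le_iff₀ (hpos n)]
        nlinarith [hu0 n, huhalf n]
      linarith
    have hmult : Multipliable fun n => 1 - u n :=
      Real.multipliable_of_summable_log hpos hlog
    set P := ∏' n : ℕ, (1 - u n) with hP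
    -- lower bound
    have hfin : ∀ N : ℕ, 1 - (∑ i ∈ Finset.range N, u i) ≤ ∏ i ∈ Finset.range N, (1 - u i) := by
      intro N
      induction N with
      | zero => simp
      | succ N ih =>
        rw [Finset.prod_range_succ, Finset.sum_range_succ]
        have hsnn : 0 ≤ ∑ i ∈ Finset.range N, u i := Finset.sum_nonneg fun i _ => hu0 i
        nlinarith [hpos N, hu0 N]
    have hlower : 1 - U ≤ P := by
      apply ge_of_tendsto' hmult.hasProd.tendsto_prod_nat
      intro N
      refine le_trans ?_ (hfin N)
      have := Summable.sum_le_tsum (Finset.range N) (fun i _ => hu0 i) husum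
      linarith
    -- upper bound
    have hupper : P ≤ Real.exp (-U) := by
      apply le_of_tendsto_of_tendsto' hmult.hasProd.tendsto_prod_nat
        (Tendsto.comp (Real.continuous_exp.tendsto _) husum.hasSum.tendsto_sum_nat.neg)
      intro N
      calc ∏ i ∈ Finset.range N, (1 - u i)
          ≤ ∏ i ∈ Finset.range N, Real.exp (-u i) := by
            apply Finset.prod_le_prod (fun i _ => le_of_lt (hpos i))
            intro i _
            have := Real.add_one_le_exp (-u i)
            linarith
        _ = Real.exp (-(∑ i ∈ Finset.range N, u i)) := by
            rw [← Real.exp_sum, Finset.sum_neg_distrib]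
    have hexp : Real.exp (-U) ≤ 1 - U + U ^ 2 := by
      have h1 := Real.add_one_le_exp U
      have h2 := Real.exp_pos U
      have h3 : Real.exp (-U) = (Real.exp U)⁻¹ := Real.exp_neg U
      rw [h3, inv_le_iff_one_le_mul₀ h2]
      nlinarith [mul_le_mul_of_nonneg_left h1
        (by nlinarith [sq_nonneg (U - 1)] : (0:ℝ) ≤ 1 - U + U ^ 2),
        mul_nonneg (mul_nonneg hU0 hU0) hU0]
    -- conclude
    have hPb : 1 - U ≤ P ∧ P ≤ 1 - U + U ^ 2 := ⟨hlower, le_trans hupper hexp⟩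
    have htp : (0:ℝ) < t ^ 2 := by positivity
    rw [abs_le]
    constructor
    · rw [div_add' _ _ _ (ne_of_gt htp), le_div_iff₀ htp]
      nlinarith [hPb.1, hUeq]
    · rw [div_add' _ _ _ (ne_of_gt htp), div_le_iff₀ htp]
      nlinarith [hPb.2, hUeq, sq_nonneg t]
  -- squeeze
  have h1 : ∀ᶠ t in nhdsWithin (0:ℝ) {t : ℝ | t ≠ 0}, |t| < |x 0| / 2 := by
    apply eventually_nhdsWithin_of_eventually_nhds
    have := eventually_abs_sub_lt (0:ℝ) (by positivity : (0:ℝ) < |x 0| / 2)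
    simpa using this
  have h2 : ∀ᶠ t in nhdsWithin (0:ℝ) {t : ℝ | t ≠ 0}, t ≠ 0 :=
    eventually_mem_nhdsWithin
  have hz : Tendsto (fun t : ℝ => S ^ 2 * t ^ 2) (nhdsWithin 0 {t : ℝ | t ≠ 0}) (nhds 0) := by
    apply tendsto_nhdsWithin_of_tendsto_nhds
    have : Continuous fun t : ℝ => S ^ 2 * t ^ 2 := by continuity
    simpa using this.tendsto 0
  have h0 : Tendsto (fun t => ((∏' n : ℕ, (1 - t ^ 2 / (x n) ^ 2)) - 1) / t ^ 2 + S)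
      (nhdsWithin 0 {t : ℝ | t ≠ 0}) (nhds 0) := by
    apply squeeze_zero_norm' _ hz
    filter_upwards [h1, h2] with t ht htne
    rw [Real.norm_eq_abs]
    exact key t htne ht
  have := h0.add (tendsto_const_nhds (x := -S))
  simpa using this

/-- If `q > 1` and `(x_n)` is a sequence of nonzero reals with `0 < |x₁| < |x₂| < ⋯`,
`∑ 1/x_n² < ∞`, and `sin_q x = x ∏_{n≥1} (1 - x²/x_n²)` for all real `x`,
then `∑_{n≥1} 1/x_n² = 1/[3]_q!`.  (Here `x n` denotes `x_{n+1}`.) -/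
theorem qSin_zeros_sum_inverse_squares (q : ℝ) (hq : 1 < q) (x : ℕ → ℝ)
    (hx0 : 0 < |x 0|) (hmono : ∀ n, |x n| < |x (n + 1)|)
    (hsum : Summable fun n => 1 / (x n) ^ 2)
    (hprod : ∀ t : ℝ, qSin q t = t * ∏' n : ℕ, (1 - t ^ 2 / (x n) ^ 2)) :
    ∑' n : ℕ, 1 / (x n) ^ 2 = 1 / qFact q 3 := by

  have hser := series_tendsto hq
  have hpr := prod_tendsto x hx0 hmono hsum
  have hsetEq : ({t : ℝ | t ≠ 0}) = {(0:ℝ)}ᶜ := by ext t; simp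
  have hne : (nhdsWithin (0:ℝ) {t : ℝ | t ≠ 0}).NeBot := by
    rw [hsetEq]
    infer_instance
  have heq : Tendsto (fun t => (qSin q t - t) / t ^ 3)
      (nhdsWithin (0:ℝ) {t : ℝ | t ≠ 0}) (nhds (-(∑' n : ℕ, 1 / (x n) ^ 2))) := by
    apply hpr.congr'
    filter_upwards [eventually_mem_nhdsWithin] with t htne
    rw [hprod t]
    have htne' : t ≠ 0 := htne
    field_simp
  have hfinal := tendsto_nhds_unique hser heq
  have : 1 / qFact q 3 = ∑' n : ℕ, 1 / (x n) ^ 2 := by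
    have := neg_injective hfinal
    linarith [this]
  linarith [this]
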